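/- arXiv:1404.5903 — 4 statements merged into one kernel-verified Lean document; each statement's English description precedes it below -/
import Mathlib

section
/- Let Y be a chi-square random variable with t degrees of freedom. Then for any θ ≥ 1, P(Y/t ≥ θ) ≤ exp(-(t/2)(θ - 1 - log θ)) ≤ exp(-t·α(θ)), where α(θ) = (1/2)(log θ - 1 + 1/θ). -/
open MeasureTheory ProbabilityTheory

noncomputable def alphaFn (θ : ℝ) : ℝ := (Real.log θ - 1 + 1/θ) / 2

/-- The chi-square distribution with `t` degrees of freedom, as a Gamma distribution. -/
noncomputable def chiSquareMeasure (t : ℕ) : Measure ℝ := gammaMeasure ((t : ℝ) / 2) (1 / 2)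

/-!
Chernoff's bound. Since `exp (s y)` times the `Gamma(a, r)` density is `(r / (r - s)) ^ a` times
the `Gamma(a, r - s)` density, the moment generating function of `Gamma(a, r)` at `s < r` is
`(r / (r - s)) ^ a`, so `P(Y ≥ c) ≤ exp (-s c) (r / (r - s)) ^ a` for `0 ≤ s < r`. At
`c = a θ / r` the optimal choice `s = r (1 - 1/θ)` gives `exp (-a (θ - 1 - log θ))`. The second
inequality is `2 log θ ≤ θ - 1/θ`, i.e. `u ≤ sinh u` for `u = log θ ≥ 0`.
-/

open Real Set

lemma measure_Ici_le_exp_mul_lintegral_exp (μ : Measure ℝ) {s : ℝ} (hs : 0 ≤ s) (c : ℝ) :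
    μ (Ici c) ≤ ENNReal.ofReal (exp (-(s * c))) * ∫⁻ y, ENNReal.ofReal (exp (s * y)) ∂μ := by
  rw [← lintegral_const_mul' _ _ ENNReal.ofReal_ne_top, ← lintegral_indicator_one measurableSet_Ici]
  refine lintegral_mono fun y ↦ ?_
  by_cases hy : y ∈ Ici c
  · rw [indicator_of_mem hy, Pi.one_apply, ← ENNReal.ofReal_mul (exp_pos _).le, ← exp_add,
      ← ENNReal.ofReal_one, ← exp_zero]
    exact ENNReal.ofReal_le_ofReal (exp_le_exp.mpr (by nlinarith [mem_Ici.mp hy]))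
  · rw [indicator_of_notMem hy]
    exact zero_le

lemma exp_mul_gammaPDF (a : ℝ) {r s : ℝ} (x : ℝ) (hr : 0 < r) (hs : s < r) :
    ENNReal.ofReal (exp (s * x)) * gammaPDF a r x
      = ENNReal.ofReal ((r / (r - s)) ^ a) * gammaPDF a (r - s) x := by
  have hrs : 0 < r - s := by linarith
  rcases lt_or_ge x 0 with hx | hx
  · rw [gammaPDF_of_neg hx, gammaPDF_of_neg hx, mul_zero, mul_zero]
  rw [gammaPDF_of_nonneg hx, gammaPDF_of_nonneg hx,
    ← ENNReal.ofReal_mul (exp_pos _).le, ← ENNReal.ofReal_mul (by positivity)]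
  have hpow : (r / (r - s)) ^ a * (r - s) ^ a = r ^ a := by
    rw [← mul_rpow (div_pos hr hrs).le hrs.le, div_mul_cancel₀ _ hrs.ne']
  have hexp : exp (s * x) * exp (-(r * x)) = exp (-((r - s) * x)) := by
    rw [← exp_add]; ring_nf
  congr 1
  calc exp (s * x) * (r ^ a / Gamma a * x ^ (a - 1) * exp (-(r * x)))
      = r ^ a / Gamma a * x ^ (a - 1) * (exp (s * x) * exp (-(r * x))) := by ring
    _ = _ := by rw [hexp, ← hpow]; ring

lemma lintegral_exp_mul_gammaMeasure {a r s : ℝ} (ha : 0 < a) (hr : 0 < r) (hs : s < r) :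
    ∫⁻ y, ENNReal.ofReal (exp (s * y)) ∂gammaMeasure a r = ENNReal.ofReal ((r / (r - s)) ^ a) := by
  have hmeas : Measurable (gammaPDF a r) := (measurable_gammaPDFReal a r).ennreal_ofReal
  rw [gammaMeasure, lintegral_withDensity_eq_lintegral_mul _ hmeas (by fun_prop)]
  simp only [Pi.mul_apply, mul_comm (gammaPDF a r _), exp_mul_gammaPDF a _ hr hs]
  rw [lintegral_const_mul' _ _ ENNReal.ofReal_ne_top,
    lintegral_gammaPDF_eq_one ha (sub_pos.mpr hs), mul_one]

lemma gammaMeasure_Ici_le {a r θ : ℝ} (ha : 0 < a) (hr : 0 < r) (hθ : 1 ≤ θ) :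
    gammaMeasure a r (Ici (a * θ / r)) ≤ ENNReal.ofReal (exp (-a * (θ - 1 - log θ))) := by
  have hθ0 : 0 < θ := one_pos.trans_le hθ
  set s := r * (1 - θ⁻¹)
  have hs : 0 ≤ s := mul_nonneg hr.le (sub_nonneg.mpr (inv_le_one_of_one_le₀ hθ))
  have hsr : s < r := by simp only [s]; nlinarith [inv_pos.mpr hθ0]
  have hratio : r / (r - s) = θ := by simp only [s]; field_simp; ring
  calc gammaMeasure a r (Ici (a * θ / r))
      ≤ ENNReal.ofReal (exp (-(s * (a * θ / r)))) *
          ∫⁻ y, ENNReal.ofReal (exp (s * y)) ∂gammaMeasure a r :=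
        measure_Ici_le_exp_mul_lintegral_exp _ hs _
    _ = ENNReal.ofReal (exp (-(s * (a * θ / r))) * θ ^ a) := by
        rw [lintegral_exp_mul_gammaMeasure ha hr hsr, hratio,
          ENNReal.ofReal_mul (exp_pos _).le]
    _ = ENNReal.ofReal (exp (-a * (θ - 1 - log θ))) := by
        rw [rpow_def_of_pos hθ0, ← exp_add]
        congr 2
        simp only [s]
        field_simp
        ring

lemma two_mul_log_le_sub_inv {x : ℝ} (hx : 1 ≤ x) : 2 * log x ≤ x - x⁻¹ := by
  have hx0 : 0 < x := one_pos.trans_le hx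
  have hsinh : log x ≤ sinh (log x) := self_le_sinh_iff.mpr (log_nonneg hx)
  rw [sinh_eq, exp_neg, exp_log hx0] at hsinh
  linarith

theorem chiSquare_upper_tail (t : ℕ) (ht : 0 < t) (θ : ℝ) (hθ : 1 ≤ θ) :
    chiSquareMeasure t {y : ℝ | θ ≤ y / (t : ℝ)}
        ≤ ENNReal.ofReal (Real.exp (-((t : ℝ) / 2) * (θ - 1 - Real.log θ))) ∧
    Real.exp (-((t : ℝ) / 2) * (θ - 1 - Real.log θ))
        ≤ Real.exp (-(t : ℝ) * alphaFn θ) := by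
  have htR : (0 : ℝ) < t := Nat.cast_pos.mpr ht
  refine ⟨?_, exp_le_exp.mpr ?_⟩
  · have hset : {y : ℝ | θ ≤ y / (t : ℝ)} = Ici ((t : ℝ) / 2 * θ / (1 / 2)) := by
      ext y
      rw [mem_ofPred_eq, mem_Ici, le_div_iff₀ htR]
      ring_nf
    rw [chiSquareMeasure, hset]
    exact gammaMeasure_Ici_le (by positivity) one_half_pos hθ
  · have hlog := two_mul_log_le_sub_inv hθ
    rw [alphaFn, one_div]
    nlinarith
end

section
/- There exists a universal constant c > 0 such that β(min(2, R)) ≤ c·α(R) for all R ≥ 1, where β(θ) = θ - 1 - log θ and α(θ) = (1/2)(log θ - 1 + 1/θ). -/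
noncomputable def betaFn (θ : ℝ) : ℝ := θ - 1 - Real.log θ

/-!
On `[1, 2]` the bound `β ≤ 4α` reduces, via `log R ≥ 2(R - 1)/(R + 1)`, to
`(R - 1)²(2 - R) ≥ 0`. For `R ≥ 2` the left side is the constant `β(2)`, which is at most `4α(2)`
by the case `R = 2`, and `α` is nondecreasing on `[1, ∞)`.
-/

open Real

-- The first term of the series `log x = 2 artanh ((x - 1) / (x + 1))`.
theorem two_mul_sub_one_div_add_one_le_log {x : ℝ} (hx : 1 ≤ x) :
    2 * (x - 1) / (x + 1) ≤ log x := by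
  have hx1 : 0 < x + 1 := by linarith
  have hratio : (1 + (x - 1) / (x + 1)) / (1 - (x - 1) / (x + 1)) = x := by
    field_simp
    ring
  have key := sum_range_le_log_div (x := (x - 1) / (x + 1)) (div_nonneg (by linarith) hx1.le)
    ((div_lt_one hx1).2 (by linarith)) 1
  norm_num [hratio] at key
  rw [mul_div_assoc]
  linarith

theorem alphaFn_monotoneOn : MonotoneOn alphaFn (Set.Ici 1) := by
  intro x (hx : 1 ≤ x) y (hy : 1 ≤ y) hxy
  have hx0 : 0 < x := by linarith
  have hy0 : 0 < y := by linarith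
  have hlog : 1 - x / y ≤ log y - log x := by
    rw [← log_div hy0.ne' hx0.ne']
    simpa [one_div, inv_div] using one_sub_inv_le_log_of_pos (div_pos hy0 hx0)
  have hquot : 1 / x - 1 / y ≤ 1 - x / y := by
    rw [div_sub_div _ _ hx0.ne' hy0.ne', one_sub_div hy0.ne', div_le_div_iff₀ (by positivity) hy0]
    nlinarith [mul_nonneg (mul_nonneg (sub_nonneg.2 hxy) (sub_nonneg.2 hx)) hy0.le]
  unfold alphaFn
  linarith

theorem betaFn_le_four_mul_alphaFn {x : ℝ} (h1 : 1 ≤ x) (h2 : x ≤ 2) :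
    betaFn x ≤ 4 * alphaFn x := by
  have hx0 : 0 < x := by linarith
  have hlog := two_mul_sub_one_div_add_one_le_log h1
  have hpoly : x + 1 - 2 / x ≤ 3 * (2 * (x - 1) / (x + 1)) := by
    rw [← sub_nonneg]
    have : 3 * (2 * (x - 1) / (x + 1)) - (x + 1 - 2 / x) =
        (x - 1) ^ 2 * (2 - x) / (x * (x + 1)) := by
      field_simp
      ring
    rw [this]
    exact div_nonneg (mul_nonneg (sq_nonneg _) (by linarith)) (by positivity)
  unfold betaFn alphaFn
  rw [show 1 / x = (2 / x) / 2 by ring]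
  linarith

theorem beta_min_two_le_const_mul_alpha :
    ∃ c : ℝ, 0 < c ∧ ∀ R : ℝ, 1 ≤ R → betaFn (min 2 R) ≤ c * alphaFn R := by
  refine ⟨4, by norm_num, fun R hR => ?_⟩
  rcases le_total R 2 with hR2 | hR2
  · rw [min_eq_right hR2]
    exact betaFn_le_four_mul_alphaFn hR hR2
  · rw [min_eq_left hR2]
    calc betaFn 2 ≤ 4 * alphaFn 2 := betaFn_le_four_mul_alphaFn one_le_two le_rfl
      _ ≤ 4 * alphaFn R := by
        gcongr
        exact alphaFn_monotoneOn (Set.mem_Ici.2 one_le_two) (Set.mem_Ici.2 hR) hR2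
end

section
/- Let 1 > ρ₀ > ρ₁ ≥ 0 and R = (1-ρ₁)/(1-ρ₀). Then α(R) ≤ KL(N(ρ₀, 1-ρ₀²), N(ρ₁, 1-ρ₁²)) ≤ c·α(R) for a universal constant c > 1, where KL denotes the Kullback-Leibler divergence between one-dimensional Gaussians and α(θ) = (1/2)(log θ - 1 + 1/θ). -/
/-!
Both Gaussians have variance `1 - ρ² = (1 - ρ)(1 + ρ)`, so the closed-form divergence splits as
`KL = α(R) + (Y - 1 - log Y) / 2` with `R = (1 - ρ₁)/(1 - ρ₀)` and `Y = (1 + ρ₀)/(1 + ρ₁)`.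
The second term is nonnegative, which is the lower bound. For the upper bound, `ρ₁ ≥ 0` gives
`0 ≤ Y - 1 ≤ 1 - R⁻¹`, and `Y - 1 - log Y ≤ (Y - 1)²` together with
`(1 - s)² / 2 ≤ s - 1 - log s` for `s = R⁻¹ ≤ 1` bounds it by `2 α(R)`, so `c = 3` works.
-/

open MeasureTheory ProbabilityTheory

/-- Kullback-Leibler divergence `∫ log (dμ/dν) dμ`. -/
noncomputable def klDivReal {X : Type*} [MeasurableSpace X] (μ ν : Measure X) : ℝ :=
  ∫ x, Real.log ((μ.rnDeriv ν x).toReal) ∂μ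

open Real
open scoped NNReal

namespace ProbabilityTheory

lemma integral_sub_sq_gaussianReal (m : ℝ) (v : ℝ≥0) (q : ℝ) :
    ∫ x, (x - q) ^ 2 ∂gaussianReal m v = v + (m - q) ^ 2 := by
  have h := variance_eq_sub (memLp_id_gaussianReal' (μ := m - q) (v := v) 2 (by simp))
  simp only [Pi.pow_apply, id_eq] at h
  rw [variance_id_gaussianReal, integral_id_gaussianReal] at h
  have hmap : ∫ x, (x - q) ^ 2 ∂gaussianReal m v = ∫ y, y ^ 2 ∂(gaussianReal m v).map (· - q) :=
    (integral_map (f := fun y ↦ y ^ 2) (by fun_prop) (by fun_prop)).symm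
  rw [hmap, gaussianReal_map_sub_const]
  linarith

lemma integrable_sub_sq_gaussianReal (m : ℝ) (v : ℝ≥0) (q : ℝ) :
    Integrable (fun x ↦ (x - q) ^ 2) (gaussianReal m v) :=
  ((memLp_id_gaussianReal' 2 (by simp)).sub (memLp_const q)).integrable_sq

lemma log_gaussianPDFReal (m : ℝ) {v : ℝ≥0} (hv : v ≠ 0) (x : ℝ) :
    log (gaussianPDFReal m v x) = -log (2 * π * v) / 2 - (x - m) ^ 2 / (2 * v) := by
  rw [gaussianPDFReal, log_mul (by positivity) (exp_ne_zero _), log_inv, log_sqrt (by positivity),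
    log_exp]
  ring

lemma rnDeriv_gaussianReal_gaussianReal (m₀ m₁ : ℝ) (v₀ : ℝ≥0) {v₁ : ℝ≥0} (h₁ : v₁ ≠ 0) :
    (gaussianReal m₀ v₀).rnDeriv (gaussianReal m₁ v₁) =ᵐ[volume]
      fun x ↦ gaussianPDF m₀ v₀ x / gaussianPDF m₁ v₁ x := by
  rw [gaussianReal_of_var_ne_zero m₁ h₁]
  filter_upwards [Measure.rnDeriv_withDensity_right (gaussianReal m₀ v₀) volume
      (measurable_gaussianPDF m₁ v₁).aemeasurable
      (ae_of_all _ fun x ↦ (gaussianPDF_pos m₁ h₁ x).ne') (ae_of_all _ fun _ ↦ gaussianPDF_ne_top),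
    rnDeriv_gaussianReal m₀ v₀] with x hx hx₀
  rw [hx, hx₀, div_eq_mul_inv, mul_comm]

lemma log_rnDeriv_gaussianReal_ae_eq (m₀ m₁ : ℝ) {v₀ v₁ : ℝ≥0} (h₀ : v₀ ≠ 0) (h₁ : v₁ ≠ 0) :
    (fun x ↦ log ((gaussianReal m₀ v₀).rnDeriv (gaussianReal m₁ v₁) x).toReal)
      =ᵐ[gaussianReal m₀ v₀]
      fun x ↦ log (v₁ / v₀) / 2 + (x - m₁) ^ 2 / (2 * v₁) - (x - m₀) ^ 2 / (2 * v₀) := by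
  filter_upwards [(gaussianReal_absolutelyContinuous m₀ h₀).ae_eq
    (rnDeriv_gaussianReal_gaussianReal m₀ m₁ v₀ h₁)] with x hx
  have hv₀ : (0 : ℝ) < v₀ := by positivity
  have hv₁ : (0 : ℝ) < v₁ := by positivity
  rw [hx, ENNReal.toReal_div, toReal_gaussianPDF, toReal_gaussianPDF,
    log_div (gaussianPDFReal_pos _ _ _ h₀).ne' (gaussianPDFReal_pos _ _ _ h₁).ne',
    log_gaussianPDFReal m₀ h₀, log_gaussianPDFReal m₁ h₁, log_div hv₁.ne' hv₀.ne',
    log_mul (by positivity) hv₀.ne', log_mul (by positivity) hv₁.ne']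
  ring

theorem klDivReal_gaussianReal (m₀ m₁ : ℝ) {v₀ v₁ : ℝ≥0} (h₀ : v₀ ≠ 0) (h₁ : v₁ ≠ 0) :
    klDivReal (gaussianReal m₀ v₀) (gaussianReal m₁ v₁)
      = (log (v₁ / v₀) + v₀ / v₁ - 1 + (m₀ - m₁) ^ 2 / v₁) / 2 := by
  rw [klDivReal, integral_congr_ae (log_rnDeriv_gaussianReal_ae_eq m₀ m₁ h₀ h₁),
    integral_sub ((integrable_const _).fun_add ((integrable_sub_sq_gaussianReal _ _ _).div_const _))
      ((integrable_sub_sq_gaussianReal _ _ _).div_const _),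
    integral_add (integrable_const _) ((integrable_sub_sq_gaussianReal _ _ _).div_const _),
    integral_div, integral_div, integral_div, integral_sub_sq_gaussianReal,
    integral_sub_sq_gaussianReal, integral_const]
  rw [probReal_univ, one_smul, sub_self]
  field_simp
  ring

end ProbabilityTheory

namespace Real

lemma add_sq_div_two_le_neg_log_one_sub {u : ℝ} (hu₀ : 0 ≤ u) (hu₁ : u < 1) :
    u + u ^ 2 / 2 ≤ -log (1 - u) := by
  have h := sum_le_hasSum (Finset.range 2) (fun n _ ↦ by positivity)
    (hasSum_pow_div_log_of_abs_lt_one (abs_lt.2 ⟨by linarith, hu₁⟩))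
  norm_num [Finset.sum_range_succ] at h
  linarith

lemma sq_div_two_le_sub_one_sub_log {s : ℝ} (hs₀ : 0 < s) (hs₁ : s ≤ 1) :
    (1 - s) ^ 2 / 2 ≤ s - 1 - log s := by
  have h := add_sq_div_two_le_neg_log_one_sub (u := 1 - s) (by linarith) (by linarith)
  rw [sub_sub_cancel] at h
  linarith

lemma sub_one_sub_log_le_sq {t : ℝ} (ht : 1 ≤ t) : t - 1 - log t ≤ (t - 1) ^ 2 := by
  have ht₀ : 0 < t := by linarith
  have h := one_sub_inv_le_log_of_pos ht₀
  have : t - 1 - (1 - t⁻¹) = (t - 1) ^ 2 / t := by field_simp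
  have : (t - 1) ^ 2 / t ≤ (t - 1) ^ 2 := div_le_self (sq_nonneg _) ht
  linarith

end Real

lemma alphaFn_eq_inv_sub_one_sub_log_inv (θ : ℝ) : alphaFn θ = (θ⁻¹ - 1 - log θ⁻¹) / 2 := by
  rw [alphaFn, log_inv, one_div]
  ring

lemma one_sub_inv_sq_div_four_le_alphaFn {θ : ℝ} (hθ : 1 ≤ θ) : (1 - θ⁻¹) ^ 2 / 4 ≤ alphaFn θ := by
  rw [alphaFn_eq_inv_sub_one_sub_log_inv]
  have := sq_div_two_le_sub_one_sub_log (inv_pos.2 (by linarith)) (inv_le_one_of_one_le₀ hθ)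
  linarith

lemma klDivReal_gaussianReal_one_sub_sq {ρ₀ ρ₁ : ℝ} (h₀ : |ρ₀| < 1) (h₁ : |ρ₁| < 1) :
    klDivReal (gaussianReal ρ₀ (1 - ρ₀ ^ 2).toNNReal) (gaussianReal ρ₁ (1 - ρ₁ ^ 2).toNNReal)
      = alphaFn ((1 - ρ₁) / (1 - ρ₀))
        + ((1 + ρ₀) / (1 + ρ₁) - 1 - log ((1 + ρ₀) / (1 + ρ₁))) / 2 := by
  obtain ⟨h₀l, h₀r⟩ := abs_lt.1 h₀
  obtain ⟨h₁l, h₁r⟩ := abs_lt.1 h₁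
  have hv₀ : 0 < 1 - ρ₀ ^ 2 := by nlinarith
  have hv₁ : 0 < 1 - ρ₁ ^ 2 := by nlinarith
  have : 1 - ρ₀ ≠ 0 := by linarith
  have : 1 + ρ₀ ≠ 0 := by linarith
  have : 1 + ρ₁ ≠ 0 := by linarith
  have hratio : (1 - ρ₁ ^ 2) / (1 - ρ₀ ^ 2) = (1 - ρ₁) / (1 - ρ₀) / ((1 + ρ₀) / (1 + ρ₁)) := by
    field_simp
    ring
  rw [klDivReal_gaussianReal _ _ (toNNReal_pos.2 hv₀).ne' (toNNReal_pos.2 hv₁).ne',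
    coe_toNNReal _ hv₀.le, coe_toNNReal _ hv₁.le, hratio,
    log_div (div_pos (by linarith) (by linarith)).ne' (div_pos (by linarith) (by linarith)).ne',
    alphaFn]
  field_simp
  ring

theorem kl_gaussians_comparable_alpha :
    ∃ c : ℝ, 1 < c ∧
      ∀ ρ₀ ρ₁ : ℝ, 0 ≤ ρ₁ → ρ₁ < ρ₀ → ρ₀ < 1 →
        alphaFn ((1 - ρ₁) / (1 - ρ₀))
            ≤ klDivReal (gaussianReal ρ₀ (Real.toNNReal (1 - ρ₀^2)))
                (gaussianReal ρ₁ (Real.toNNReal (1 - ρ₁^2))) ∧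
        klDivReal (gaussianReal ρ₀ (Real.toNNReal (1 - ρ₀^2)))
            (gaussianReal ρ₁ (Real.toNNReal (1 - ρ₁^2)))
          ≤ c * alphaFn ((1 - ρ₁) / (1 - ρ₀)) := by
  refine ⟨3, by norm_num, fun ρ₀ ρ₁ hρ₁ hlt hρ₀ ↦ ?_⟩
  rw [klDivReal_gaussianReal_one_sub_sq (abs_lt.2 ⟨by linarith, hρ₀⟩)
    (abs_lt.2 ⟨by linarith, by linarith⟩)]
  have : 1 - ρ₀ ≠ 0 := by linarith
  have : 1 - ρ₁ ≠ 0 := by linarith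
  have : 1 + ρ₁ ≠ 0 := by linarith
  set R := (1 - ρ₁) / (1 - ρ₀) with hR_def
  set Y := (1 + ρ₀) / (1 + ρ₁) with hY_def
  have hR : 1 ≤ R := by rw [le_div_iff₀ (by linarith)]; linarith
  have hY : 1 ≤ Y := by rw [le_div_iff₀ (by linarith)]; linarith
  have hYR : Y - 1 ≤ 1 - R⁻¹ := by
    have hY' : Y - 1 = (ρ₀ - ρ₁) / (1 + ρ₁) := by rw [hY_def]; field_simp; ring
    have hR' : 1 - R⁻¹ = (ρ₀ - ρ₁) / (1 - ρ₁) := by rw [hR_def, inv_div]; field_simp; ring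
    rw [hY', hR']
    gcongr <;> linarith
  have hlog_le := log_le_sub_one_of_pos (by linarith : 0 < Y)
  have hYsq := sub_one_sub_log_le_sq hY
  have hsq : (Y - 1) ^ 2 ≤ (1 - R⁻¹) ^ 2 := pow_le_pow_left₀ (by linarith) hYR 2
  have hα := one_sub_inv_sq_div_four_le_alphaFn hR
  constructor <;> linarith
end

section
/- Let 0 ≤ σ < 1 and let (X₁ₛ, X₂ₛ), s = 1,…,t be i.i.d. bivariate Gaussian pairs with zero means, unit variances and correlation σ. Define the difference-based estimator σ̂_t = 1 - (1/t)Σₛ (X₁ₛ - X₂ₛ)²/2. Then for any θ ≥ 1, P(1 - σ̂_t ≥ θ(1-σ)) ≤ exp(-t·α(θ)) and P(1 - σ̂_t ≤ (1-σ)/θ) ≤ exp(-t·α(θ)), where α(θ) = (1/2)(log θ - 1 + 1/θ). -/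
/-!
Each summand `(X₁ₛ - X₂ₛ)² / 2` is `(1 - σ)` times half the square of a standard Gaussian, since
`X₁ₛ - X₂ₛ ~ N(0, 2(1 - σ))`; hence `E exp (λ (X₁ₛ - X₂ₛ)² / 2) = (1 - 2λ(1 - σ))^(-1/2)`.
The Chernoff bound with `λ = (a - 1) / (2a(1 - σ))` bounds both `P(t(1 - σ̂_t) ≥ t a (1 - σ))`
(for `a ≥ 1`) and `P(t(1 - σ̂_t) ≤ t a (1 - σ))` (for `a ≤ 1`) by `exp (-t (a - 1 - log a) / 2)`.
Taking `a = 1/θ` gives exactly `α(θ)`; taking `a = θ` gives an exponent that is at least `α(θ)`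
because `2 log θ ≤ θ - 1/θ`.
-/

open MeasureTheory ProbabilityTheory

/-- The centered bivariate Gaussian distribution with unit variances and correlation `σ`. -/
noncomputable def bivGaussian (σ : ℝ) : Measure (ℝ × ℝ) :=
  Measure.map (fun p : ℝ × ℝ => (p.1, σ * p.1 + Real.sqrt (1 - σ^2) * p.2))
    ((gaussianReal 0 1).prod (gaussianReal 0 1))

/-- `1 - σ̂_t`, where `σ̂_t` is the difference-based correlation estimator. -/
noncomputable def oneMinusEst {t : ℕ} (x : Fin t → ℝ × ℝ) : ℝ :=
  (1 / (t : ℝ)) * ∑ s, ((x s).1 - (x s).2)^2 / 2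

open Real
open scoped NNReal

section Chernoff

variable {α : Type*} [MeasurableSpace α]

lemma measure_le_exp_neg_mul_lintegral_exp (μ : Measure α) {g : α → ℝ} (hg : Measurable g)
    {c : ℝ} {E : Set α} (hE : ∀ x ∈ E, c ≤ g x) :
    μ E ≤ ENNReal.ofReal (exp (-c)) * ∫⁻ x, ENNReal.ofReal (exp (g x)) ∂μ :=
  calc μ E ≤ μ {x | ENNReal.ofReal (exp c) ≤ ENNReal.ofReal (exp (g x))} :=
        measure_mono fun x hx => ENNReal.ofReal_le_ofReal (exp_le_exp.2 (hE x hx))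
    _ ≤ (∫⁻ x, ENNReal.ofReal (exp (g x)) ∂μ) / ENNReal.ofReal (exp c) :=
        meas_ge_le_lintegral_div (by fun_prop) (by positivity) ENNReal.ofReal_ne_top
    _ = ENNReal.ofReal (exp (-c)) * ∫⁻ x, ENNReal.ofReal (exp (g x)) ∂μ := by
        rw [ENNReal.div_eq_inv_mul, ← ENNReal.ofReal_inv_of_pos (exp_pos c), exp_neg]

variable {ι : Type*} [Fintype ι] (ν : Measure α) [IsProbabilityMeasure ν]

lemma lintegral_exp_sum_pi {f : α → ℝ} (hf : Measurable f) :
    ∫⁻ x, ENNReal.ofReal (exp (∑ i, f (x i))) ∂Measure.pi (fun _ : ι => ν) =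
      (∫⁻ y, ENNReal.ofReal (exp (f y)) ∂ν) ^ Fintype.card ι := by
  simp_rw [exp_sum, ENNReal.ofReal_prod_of_nonneg fun _ _ => (exp_pos _).le]
  rw [lintegral_prod_eq_prod_lintegral_of_indepFun _ _
      (iIndepFun_pi (X := fun _ y => ENNReal.ofReal (exp (f y))) fun _ => by fun_prop)
      fun i => by fun_prop]
  simp_rw [(measurePreserving_eval (fun _ : ι => ν) _).lintegral_comp
    (f := fun y => ENNReal.ofReal (exp (f y))) (by fun_prop)]
  rw [Finset.prod_const, Finset.card_univ]

lemma measure_pi_le_exp_neg_mul_lintegral_exp_pow {f : α → ℝ} (hf : Measurable f) {l c : ℝ}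
    {E : Set (ι → α)} (hE : ∀ x ∈ E, c ≤ l * ∑ i, f (x i)) :
    Measure.pi (fun _ => ν) E ≤
      ENNReal.ofReal (exp (-c)) * (∫⁻ y, ENNReal.ofReal (exp (l * f y)) ∂ν) ^ Fintype.card ι := by
  simp_rw [Finset.mul_sum] at hE
  rw [← lintegral_exp_sum_pi ν (hf.const_mul l)]
  exact measure_le_exp_neg_mul_lintegral_exp _ (by fun_prop) hE

end Chernoff

section Gaussian

lemma lintegral_exp_mul_sq_gaussianReal_one {c : ℝ} (hc : c < 1) :
    ∫⁻ y, ENNReal.ofReal (exp (c * (y ^ 2 / 2))) ∂gaussianReal 0 1 =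
      ENNReal.ofReal (√(1 - c))⁻¹ := by
  have h1c : 0 < 1 - c := by linarith
  have hdens : ∀ y : ℝ, gaussianPDF 0 1 y * ENNReal.ofReal (exp (c * (y ^ 2 / 2))) =
      ENNReal.ofReal ((√(2 * π))⁻¹ * exp (-((1 - c) / 2) * y ^ 2)) := by
    intro y
    rw [gaussianPDF, gaussianPDFReal, ← ENNReal.ofReal_mul (by positivity), mul_assoc,
      ← exp_add]
    congr 3
    · simp
    · push_cast; ring
  rw [gaussianReal_of_var_ne_zero _ one_ne_zero,
    lintegral_withDensity_eq_lintegral_mul _ (measurable_gaussianPDF 0 1) (by fun_prop)]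
  simp only [Pi.mul_apply, hdens]
  rw [← ofReal_integral_eq_lintegral_ofReal
      ((integrable_exp_neg_mul_sq (by linarith)).const_mul _) (ae_of_all _ fun _ => by positivity),
    integral_const_mul, integral_gaussian, div_div_eq_mul_div, mul_comm π,
    sqrt_div' _ h1c.le]
  congr 1
  field_simp

lemma lintegral_exp_mul_sq_gaussianReal {c : ℝ} {v : ℝ≥0} (hcv : c * v < 1) :
    ∫⁻ y, ENNReal.ofReal (exp (c * (y ^ 2 / 2))) ∂gaussianReal 0 v =
      ENNReal.ofReal (√(1 - c * v))⁻¹ := by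
  have hv : gaussianReal 0 v = (gaussianReal 0 1).map (√v * ·) := by
    rw [gaussianReal_map_const_mul]
    congr 1
    · simp
    · ext; simp
  rw [hv, lintegral_map (by fun_prop) (by fun_prop), ← lintegral_exp_mul_sq_gaussianReal_one hcv]
  simp_rw [mul_pow, sq_sqrt v.coe_nonneg, mul_div_assoc, mul_assoc]

instance (σ : ℝ) : IsProbabilityMeasure (bivGaussian σ) :=
  Measure.isProbabilityMeasure_map (by fun_prop)

lemma bivGaussian_map_sub {σ : ℝ} (hσ₀ : -1 ≤ σ) (hσ₁ : σ ≤ 1) :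
    (bivGaussian σ).map (fun p => p.1 - p.2) = gaussianReal 0 (2 * (1 - σ)).toNNReal := by
  set γ := (gaussianReal 0 1).prod (gaussianReal 0 1)
  have hs : √(1 - σ ^ 2) ^ 2 = 1 - σ ^ 2 := sq_sqrt (by nlinarith)
  have hsplit : (fun p : ℝ × ℝ => p.1 - (σ * p.1 + √(1 - σ ^ 2) * p.2)) =
      (fun p => (1 - σ) * p.1) + (fun p => -√(1 - σ ^ 2) * p.2) := by
    ext p; simp only [Pi.add_apply]; ring
  have hfst : γ.map (fun p => (1 - σ) * p.1) =
      gaussianReal 0 (.mk ((1 - σ) ^ 2) (sq_nonneg _)) := by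
    rw [show (fun p : ℝ × ℝ => (1 - σ) * p.1) = ((1 - σ) * ·) ∘ Prod.fst from rfl,
      ← Measure.map_map (measurable_const_mul _) measurable_fst, Measure.map_fst_prod,
      measure_univ, one_smul, gaussianReal_map_const_mul]
    simp
  have hsnd : γ.map (fun p => -√(1 - σ ^ 2) * p.2) =
      gaussianReal 0 (.mk (1 - σ ^ 2) (by nlinarith)) := by
    rw [show (fun p : ℝ × ℝ => -√(1 - σ ^ 2) * p.2) = (-√(1 - σ ^ 2) * ·) ∘ Prod.snd from rfl,
      ← Measure.map_map (measurable_const_mul _) measurable_snd, Measure.map_snd_prod,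
      measure_univ, one_smul, gaussianReal_map_const_mul]
    simp [hs]
  rw [bivGaussian, Measure.map_map (by fun_prop) (by fun_prop), Function.comp_def, hsplit,
    gaussianReal_add_gaussianReal_of_indepFun
      (indepFun_prod (measurable_const_mul _) (measurable_const_mul _)) hfst hsnd, add_zero]
  congr 1
  ext
  simp only [NNReal.coe_add, NNReal.coe_mk, Real.coe_toNNReal',
    max_eq_left (by linarith : 0 ≤ 2 * (1 - σ))]
  ring

lemma lintegral_exp_mul_sq_sub_bivGaussian {σ l : ℝ} (hσ₀ : -1 ≤ σ) (hσ₁ : σ ≤ 1)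
    (hl : 2 * l * (1 - σ) < 1) :
    ∫⁻ p, ENNReal.ofReal (exp (l * ((p.1 - p.2) ^ 2 / 2))) ∂bivGaussian σ =
      ENNReal.ofReal (√(1 - 2 * l * (1 - σ)))⁻¹ := by
  have hcv : l * (2 * (1 - σ)).toNNReal = 2 * l * (1 - σ) := by
    rw [Real.coe_toNNReal _ (by linarith)]; ring
  rw [← lintegral_map (f := fun y => ENNReal.ofReal (exp (l * (y ^ 2 / 2)))) (by fun_prop)
      (by fun_prop), bivGaussian_map_sub hσ₀ hσ₁,
    lintegral_exp_mul_sq_gaussianReal (hcv ▸ hl), hcv]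

end Gaussian

/-- The Cramér rate function of `χ²(1)`, the Legendre transform of `λ ↦ -log (1 - 2λ) / 2`. -/
noncomputable def chiSqRate (a : ℝ) : ℝ := (a - 1 - log a) / 2

lemma measure_pi_bivGaussian_le_exp_chiSqRate {ι : Type*} [Fintype ι] {σ a : ℝ}
    (hσ₀ : -1 ≤ σ) (hσ₁ : σ < 1) (ha : 0 < a) {E : Set (ι → ℝ × ℝ)}
    (hE : ∀ x ∈ E,
      0 ≤ (a - 1) * (∑ i, ((x i).1 - (x i).2) ^ 2 / 2 - Fintype.card ι * a * (1 - σ))) :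
    Measure.pi (fun _ => bivGaussian σ) E ≤
      ENNReal.ofReal (exp (-Fintype.card ι * chiSqRate a)) := by
  have hm : 0 < 1 - σ := by linarith
  set n : ℝ := (Fintype.card ι : ℝ)
  set l := (a - 1) / (2 * a * (1 - σ)) with hl_def
  have hl : 1 - 2 * l * (1 - σ) = a⁻¹ := by rw [hl_def]; field_simp; ring
  have hc : ∀ x ∈ E, n * (a - 1) / 2 ≤ l * ∑ i, ((x i).1 - (x i).2) ^ 2 / 2 := by
    intro x hx
    have hx := hE x hx
    generalize ∑ i, ((x i).1 - (x i).2) ^ 2 / 2 = S at hx ⊢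
    have key : l * S - n * (a - 1) / 2 = (a - 1) * (S - n * a * (1 - σ)) / (2 * a * (1 - σ)) := by
      rw [hl_def]; field_simp
    linarith [div_nonneg hx (by positivity : (0 : ℝ) ≤ 2 * a * (1 - σ))]
  refine (measure_pi_le_exp_neg_mul_lintegral_exp_pow _
    (f := fun p : ℝ × ℝ => (p.1 - p.2) ^ 2 / 2) (by fun_prop) hc).trans_eq ?_
  rw [lintegral_exp_mul_sq_sub_bivGaussian hσ₀ hσ₁.le (by linarith [inv_pos.2 ha]), hl,
    sqrt_inv, inv_inv, ← ENNReal.ofReal_pow (sqrt_nonneg _), ← ENNReal.ofReal_mul (by positivity),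
    sqrt_eq_rpow, rpow_def_of_pos ha, ← exp_nat_mul, ← exp_add, chiSqRate]
  congr 2
  ring

lemma alphaFn_eq_chiSqRate_inv (θ : ℝ) : alphaFn θ = chiSqRate θ⁻¹ := by
  rw [alphaFn, chiSqRate, log_inv]
  ring

lemma alphaFn_le_chiSqRate {θ : ℝ} (hθ : 1 ≤ θ) : alphaFn θ ≤ chiSqRate θ := by
  have h := self_le_sinh_iff.2 (log_nonneg hθ)
  rw [sinh_log (by linarith)] at h
  rw [alphaFn, chiSqRate]
  linarith [one_div θ]

lemma natCast_mul_oneMinusEst {t : ℕ} (ht : 0 < t) (x : Fin t → ℝ × ℝ) :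
    t * oneMinusEst x = ∑ s, ((x s).1 - (x s).2) ^ 2 / 2 := by
  rw [oneMinusEst, ← mul_assoc, mul_one_div_cancel (by positivity), one_mul]

theorem diff_estimator_concentration (σ : ℝ) (hσ0 : 0 ≤ σ) (hσ1 : σ < 1)
    (t : ℕ) (ht : 0 < t) (θ : ℝ) (hθ : 1 ≤ θ) :
    (Measure.pi fun _ : Fin t => bivGaussian σ) {x | θ * (1 - σ) ≤ oneMinusEst x}
        ≤ ENNReal.ofReal (Real.exp (-(t : ℝ) * alphaFn θ)) ∧
    (Measure.pi fun _ : Fin t => bivGaussian σ) {x | oneMinusEst x ≤ (1 - σ) / θ}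
        ≤ ENNReal.ofReal (Real.exp (-(t : ℝ) * alphaFn θ)) := by
  have hθ₀ : 0 < θ := by linarith
  have hσ₀ : -1 ≤ σ := by linarith
  constructor
  · refine (measure_pi_bivGaussian_le_exp_chiSqRate hσ₀ hσ1 hθ₀ fun x hx => ?_).trans ?_
    · have hx : θ * (1 - σ) ≤ oneMinusEst x := hx
      rw [Fintype.card_fin, ← natCast_mul_oneMinusEst ht]
      exact mul_nonneg (by linarith) (by nlinarith)
    · rw [Fintype.card_fin]
      exact ENNReal.ofReal_le_ofReal <| exp_le_exp.2 <|
        mul_le_mul_of_nonpos_left (alphaFn_le_chiSqRate hθ) (by linarith)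
  · refine (measure_pi_bivGaussian_le_exp_chiSqRate hσ₀ hσ1 (inv_pos.2 hθ₀)
      fun x hx => ?_).trans_eq ?_
    · have hx : oneMinusEst x ≤ θ⁻¹ * (1 - σ) := by rwa [inv_mul_eq_div]
      rw [Fintype.card_fin, ← natCast_mul_oneMinusEst ht]
      exact mul_nonneg_of_nonpos_of_nonpos (by linarith [inv_le_one_of_one_le₀ hθ])
        (by nlinarith)
    · rw [Fintype.card_fin, alphaFn_eq_chiSqRate_inv]
end
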